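/- arXiv:2403.04657 — 5 statements merged into one kernel-verified Lean document; each statement's English description precedes it below -/
import Mathlib

section
/- The optimal value of the SDP min { ⟨L,X⟩ : tr(X) = 1, 1 ≤ ⟨J,X⟩ ≤ n/2, X ⪰ 0 } equals λ₂(L)/2, the half of the second smallest eigenvalue of the Laplacian. -/
open Matrix Finset

lemma trace_mul_nonneg' {n : ℕ} {A B : Matrix (Fin n) (Fin n) ℝ}
    (hA : A.PosSemidef) (hB : B.PosSemidef) : 0 ≤ (A * B).trace := by
  obtain ⟨C, rfl⟩ : ∃ C : Matrix (Fin n) (Fin n) ℝ, B = Cᴴ * C := by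
    open scoped MatrixOrder in exact CStarAlgebra.nonneg_iff_eq_star_mul_self.mp hB.nonneg
  rw [← Matrix.mul_assoc, trace_mul_cycle]
  have : ∀ i, (C * A * Cᴴ) i i = (C i) ⬝ᵥ (A *ᵥ (C i)) := by
    intro i
    simp only [mul_apply, conjTranspose_apply, dotProduct, mulVec, star_trivial,
      Finset.sum_mul, Finset.mul_sum]
    rw [Finset.sum_comm]
    exact Finset.sum_congr rfl fun j _ => Finset.sum_congr rfl fun k _ => by ring
  rw [Matrix.trace]
  refine Finset.sum_nonneg fun i _ => ?_
  rw [Matrix.diag_apply, this i]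
  simpa using hA.dotProduct_mulVec_nonneg (C i)

lemma trace_mul_vecMulVec' {n : ℕ} (A : Matrix (Fin n) (Fin n) ℝ) (x y : Fin n → ℝ) :
    (A * vecMulVec x y).trace = y ⬝ᵥ (A *ᵥ x) := by
  simp only [Matrix.trace, Matrix.diag_apply, mul_apply, vecMulVec_apply, dotProduct, mulVec,
    Finset.mul_sum]
  exact Finset.sum_congr rfl fun i _ => Finset.sum_congr rfl fun j _ => by ring

lemma dot_vecMulVec' {n : ℕ} (x y : Fin n → ℝ) :
    y ⬝ᵥ (vecMulVec x x *ᵥ y) = (x ⬝ᵥ y) ^ 2 := by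
  simp only [dotProduct, mulVec, vecMulVec_apply, Finset.mul_sum, Finset.sum_mul, sq]
  rw [Finset.sum_comm]
  exact Finset.sum_congr rfl fun i _ => Finset.sum_congr rfl fun j _ => by ring

lemma isHermitian_smul_real {n : ℕ} {A : Matrix (Fin n) (Fin n) ℝ}
    (h : A.IsHermitian) (c : ℝ) : (c • A).IsHermitian := by
  unfold Matrix.IsHermitian at *
  rw [Matrix.conjTranspose_smul, star_trivial, h]

lemma vecMulVec_self_isHermitian {n : ℕ} (x : Fin n → ℝ) :
    (vecMulVec x x).IsHermitian := by
  ext i j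
  simp [conjTranspose_apply, vecMulVec_apply, mul_comm]

/-- The optimal value of the SDP
`min { ⟨L,X⟩ : tr(X) = 1, 1 ≤ ⟨J,X⟩ ≤ n/2, X ⪰ 0 }` equals `λ₂(L)/2`, where
`λ₂(L)` is the second smallest Laplacian eigenvalue, characterized variationally
(for a connected graph) as the minimum Rayleigh quotient over unit vectors
orthogonal to the all-ones vector. -/
theorem sdp_relaxation_value_eq_half_lambda2
    (n : ℕ) (hn : 3 ≤ n) (G : SimpleGraph (Fin n)) [DecidableRel G.Adj]
    (hconn : G.Connected)
    (lam2 : ℝ)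
    (hlam2 : lam2 = sInf {r : ℝ | ∃ x : Fin n → ℝ,
        x ⬝ᵥ x = 1 ∧ ∑ i, x i = 0 ∧ r = x ⬝ᵥ (G.lapMatrix ℝ *ᵥ x)}) :
    sInf {r : ℝ | ∃ X : Matrix (Fin n) (Fin n) ℝ, X.PosSemidef ∧
        X.trace = 1 ∧ 1 ≤ ∑ i, ∑ j, X i j ∧ (∑ i, ∑ j, X i j) ≤ (n : ℝ) / 2 ∧
        r = (G.lapMatrix ℝ * X).trace} = lam2 / 2 := by
  classical
  set L : Matrix (Fin n) (Fin n) ℝ := G.lapMatrix ℝ with hLdef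
  have hL : L.PosSemidef := SimpleGraph.posSemidef_lapMatrix ℝ G
  have hnpos : (0:ℝ) < n := by exact_mod_cast Nat.lt_of_lt_of_le (by norm_num) hn
  have hn3 : (3:ℝ) ≤ n := by exact_mod_cast hn
  set S1 := {r : ℝ | ∃ x : Fin n → ℝ,
      x ⬝ᵥ x = 1 ∧ ∑ i, x i = 0 ∧ r = x ⬝ᵥ (L *ᵥ x)} with hS1def
  set S2 := {r : ℝ | ∃ X : Matrix (Fin n) (Fin n) ℝ, X.PosSemidef ∧
      X.trace = 1 ∧ 1 ≤ ∑ i, ∑ j, X i j ∧ (∑ i, ∑ j, X i j) ≤ (n : ℝ) / 2 ∧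
      r = (L * X).trace} with hS2def
  -- ones vector facts
  have hLone : L *ᵥ (fun _ => (1:ℝ)) = 0 := G.lapMatrix_mulVec_const_eq_zero
  have honeL : ∀ y : Fin n → ℝ, (fun _ => (1:ℝ)) ⬝ᵥ (L *ᵥ y) = 0 := by
    intro y
    rw [dotProduct_mulVec, ← Matrix.mulVec_transpose, (G.isSymm_lapMatrix (R := ℝ)).eq, hLone]
    simp
  -- S1 nonempty
  let i0 : Fin n := ⟨0, by omega⟩
  let i1 : Fin n := ⟨1, by omega⟩
  have hx01 : i0 ≠ i1 := by
    simp [i0, i1, Fin.ext_iff]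
  have key : ∀ (f : Fin n → ℝ), (∀ i, i ≠ i0 → i ≠ i1 → f i = 0) →
      ∑ i, f i = f i0 + f i1 := by
    intro f hf
    rw [← Finset.sum_subset (Finset.subset_univ ({i0,i1} : Finset (Fin n)))
      (fun i _ hi => by
        simp only [Finset.mem_insert, Finset.mem_singleton, not_or] at hi
        exact hf i hi.1 hi.2)]
    rw [Finset.sum_pair hx01]
  set a : ℝ := (Real.sqrt 2)⁻¹ with ha
  set x0 : Fin n → ℝ := fun i => if i = i0 then a else if i = i1 then -a else 0 with hx0
  have haa : a * a = 1/2 := by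
    rw [ha, ← mul_inv, Real.mul_self_sqrt (by norm_num)]
    norm_num
  have hx0dot : x0 ⬝ᵥ x0 = 1 := by
    have := key (fun i => x0 i * x0 i) (fun i h0 h1 => by simp [hx0, h0, h1])
    simp only [dotProduct]
    rw [this]
    simp [hx0, hx01.symm, haa]
    linarith [haa]
  have hx0sum : ∑ i, x0 i = 0 := by
    rw [key x0 (fun i h0 h1 => by simp [hx0, h0, h1])]
    simp [hx0, hx01.symm]
  have hS1ne : S1.Nonempty := ⟨x0 ⬝ᵥ (L *ᵥ x0), x0, hx0dot, hx0sum, rfl⟩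
  have hS1lb : ∀ r ∈ S1, 0 ≤ r := by
    rintro r ⟨x, _, _, rfl⟩
    simpa using hL.dotProduct_mulVec_nonneg x
  have hlam2nn : 0 ≤ lam2 := hlam2 ▸ le_csInf hS1ne hS1lb
  have hbdd1 : BddBelow S1 := ⟨0, hS1lb⟩
  -- key quadratic inequality
  have hquad : ∀ y : Fin n → ℝ,
      lam2 * (y ⬝ᵥ y - (∑ i, y i)^2 / n) ≤ y ⬝ᵥ (L *ᵥ y) := by
    intro y
    set c : ℝ := (∑ i, y i) / n with hc
    set w : Fin n → ℝ := fun i => y i - c with hw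
    have hwsum : ∑ i, w i = 0 := by
      simp only [hw, Finset.sum_sub_distrib, Finset.sum_const, Finset.card_univ,
        Fintype.card_fin, nsmul_eq_mul, hc]
      field_simp
      ring
    have hLw : L *ᵥ w = L *ᵥ y := by
      have : w = y - c • (fun _ => (1:ℝ)) := by
        funext i; simp [hw]
      rw [this, Matrix.mulVec_sub, Matrix.mulVec_smul, hLone, smul_zero, sub_zero]
    have hwy : w ⬝ᵥ (L *ᵥ w) = y ⬝ᵥ (L *ᵥ y) := by
      rw [hLw]
      have : w ⬝ᵥ (L *ᵥ y) =
          y ⬝ᵥ (L *ᵥ y) - c * ((fun _ => (1:ℝ)) ⬝ᵥ (L *ᵥ y)) := by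
        simp only [dotProduct, hw, Finset.mul_sum, ← Finset.sum_sub_distrib]
        exact Finset.sum_congr rfl fun i _ => by ring
      rw [this, honeL, mul_zero, sub_zero]
    have hww : w ⬝ᵥ w = y ⬝ᵥ y - (∑ i, y i)^2 / n := by
      have h1 : w ⬝ᵥ w = y ⬝ᵥ y - (2*c)*(∑ i, y i) + n * c^2 := by
        have e : ∀ i, w i * w i = y i * y i - (2*c)*y i + c^2 := fun i => by
          simp only [hw]; ring
        calc w ⬝ᵥ w = ∑ i, (y i * y i - (2*c)*y i + c^2) :=
              Finset.sum_congr rfl fun i _ => e i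
          _ = (∑ i, y i * y i) - (2*c)*(∑ i, y i) + n * c^2 := by
              rw [Finset.sum_add_distrib, Finset.sum_sub_distrib, ← Finset.mul_sum,
                Finset.sum_const, Finset.card_univ, Fintype.card_fin, nsmul_eq_mul]
          _ = y ⬝ᵥ y - (2*c)*(∑ i, y i) + n * c^2 := rfl
      rw [h1, hc]
      field_simp
      ring
    rw [← hww, ← hwy]
    have hwwnn : 0 ≤ w ⬝ᵥ w := Finset.sum_nonneg fun i _ => mul_self_nonneg _
    rcases eq_or_lt_of_le hwwnn with h0 | hpos
    · rw [← h0, mul_zero]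
      simpa using hL.dotProduct_mulVec_nonneg w
    · set s : ℝ := Real.sqrt (w ⬝ᵥ w) with hs
      have hs2 : s * s = w ⬝ᵥ w := Real.mul_self_sqrt hwwnn
      have hspos : 0 < s := Real.sqrt_pos.mpr hpos
      set z : Fin n → ℝ := s⁻¹ • w with hz
      have hz1 : z ⬝ᵥ z = 1 := by
        rw [hz, smul_dotProduct, dotProduct_smul, smul_eq_mul, smul_eq_mul, ← mul_assoc,
          ← mul_inv, hs2]
        field_simp
      have hz2 : ∑ i, z i = 0 := by
        simp [hz, ← Finset.mul_sum, hwsum]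
      have hz3 : z ⬝ᵥ (L *ᵥ z) = (s*s)⁻¹ * (w ⬝ᵥ (L *ᵥ w)) := by
        rw [hz, Matrix.mulVec_smul, smul_dotProduct, dotProduct_smul, smul_eq_mul,
          smul_eq_mul, ← mul_assoc, mul_inv]
      have hle : lam2 ≤ z ⬝ᵥ (L *ᵥ z) := hlam2 ▸ csInf_le hbdd1 ⟨z, hz1, hz2, rfl⟩
      rw [hz3, hs2] at hle
      calc lam2 * (w ⬝ᵥ w)
          ≤ ((w ⬝ᵥ w)⁻¹ * (w ⬝ᵥ (L *ᵥ w))) * (w ⬝ᵥ w) :=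
            mul_le_mul_of_nonneg_right hle hwwnn
        _ = w ⬝ᵥ (L *ᵥ w) := by field_simp
  -- M := L - lam2 • P is PSD
  set J : Matrix (Fin n) (Fin n) ℝ := vecMulVec (fun _ => 1) (fun _ => 1) with hJ
  set P : Matrix (Fin n) (Fin n) ℝ := 1 - (n:ℝ)⁻¹ • J with hP
  have hPy : ∀ y : Fin n → ℝ, y ⬝ᵥ (P *ᵥ y) = y ⬝ᵥ y - (∑ i, y i)^2 / n := by
    intro y
    rw [hP, Matrix.sub_mulVec, dotProduct_sub, Matrix.one_mulVec,
      Matrix.smul_mulVec, dotProduct_smul, smul_eq_mul, hJ, dot_vecMulVec']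
    have : (fun _ => (1:ℝ)) ⬝ᵥ y = ∑ i, y i := by simp [dotProduct]
    rw [this]
    ring
  have hMpsd : (L - lam2 • P).PosSemidef := by
    refine PosSemidef.of_dotProduct_mulVec_nonneg ?_ ?_
    · refine hL.1.sub ?_
      refine isHermitian_smul_real ?_ lam2
      exact Matrix.isHermitian_one.sub
        (isHermitian_smul_real (vecMulVec_self_isHermitian _) _)
    · intro y
      rw [star_trivial, Matrix.sub_mulVec, dotProduct_sub, Matrix.smul_mulVec,
        dotProduct_smul, smul_eq_mul, hPy]
      have := hquad y
      linarith
  -- lower bound for S2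
  have hS2lb : ∀ r ∈ S2, lam2 / 2 ≤ r := by
    rintro r ⟨X, hX, htr, h1X, h2X, rfl⟩
    have h0 := trace_mul_nonneg' hMpsd hX
    have hJX : (J * X).trace = ∑ i, ∑ j, X i j := by
      rw [trace_mul_comm, hJ, trace_mul_vecMulVec']
      simp [dotProduct, mulVec]
    have hexp : ((L - lam2 • P) * X).trace
        = (L * X).trace - lam2 * (1 - (n:ℝ)⁻¹ * (∑ i, ∑ j, X i j)) := by
      rw [Matrix.sub_mul, trace_sub, smul_mul_assoc, trace_smul, smul_eq_mul, hP,
        Matrix.sub_mul, trace_sub, Matrix.one_mul, smul_mul_assoc, trace_smul,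
        smul_eq_mul, hJX, htr]
    rw [hexp] at h0
    have hkey : 1/2 ≤ 1 - (n:ℝ)⁻¹ * (∑ i, ∑ j, X i j) := by
      have h := mul_le_mul_of_nonneg_left h2X (inv_nonneg.mpr hnpos.le)
      have h2 : (↑n)⁻¹ * ((n:ℝ)/2) = 1/2 := by field_simp
      rw [h2] at h
      linarith
    nlinarith
  have hbdd2 : BddBelow S2 := ⟨lam2/2, hS2lb⟩
  -- construction: upper bound
  have hcons : ∀ x : Fin n → ℝ, x ⬝ᵥ x = 1 → (∑ i, x i) = 0 →
      (x ⬝ᵥ (L *ᵥ x)) / 2 ∈ S2 := by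
    intro x hxx hxs
    set X : Matrix (Fin n) (Fin n) ℝ :=
      (2:ℝ)⁻¹ • vecMulVec x x + (2*(n:ℝ))⁻¹ • J with hX
    have h2npos : (0:ℝ) < 2 * n := by linarith
    have e1 : ∀ i, ∑ j, (2:ℝ)⁻¹ * (x i * x j) = 0 := by
      intro i
      calc ∑ j, (2:ℝ)⁻¹ * (x i * x j) = (2:ℝ)⁻¹ * x i * ∑ j, x j := by
            rw [Finset.mul_sum]
            exact Finset.sum_congr rfl fun j _ => by ring
        _ = 0 := by rw [hxs]; ring
    have hsum : ∑ i, ∑ j, X i j = (n:ℝ)/2 := by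
      simp only [hX, Matrix.add_apply, Matrix.smul_apply, vecMulVec_apply, hJ,
        smul_eq_mul, Finset.sum_add_distrib]
      rw [Finset.sum_congr rfl fun i (_ : i ∈ Finset.univ) => e1 i]
      simp [Finset.sum_const, Finset.card_univ]
      field_simp
    refine ⟨X, ?_, ?_, ?_, ?_, ?_⟩
    · refine PosSemidef.of_dotProduct_mulVec_nonneg ?_ ?_
      · exact ((isHermitian_smul_real (vecMulVec_self_isHermitian x) _).add
          (isHermitian_smul_real (vecMulVec_self_isHermitian _) _))
      · intro y
        rw [star_trivial, hX, Matrix.add_mulVec, dotProduct_add,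
          Matrix.smul_mulVec, Matrix.smul_mulVec, dotProduct_smul,
          dotProduct_smul, smul_eq_mul, smul_eq_mul, hJ, dot_vecMulVec', dot_vecMulVec']
        positivity
    · rw [hX, trace_add, trace_smul, trace_smul, smul_eq_mul, smul_eq_mul]
      have h1 : (vecMulVec x x).trace = 1 := by
        rw [← hxx]; simp [Matrix.trace, vecMulVec_apply, dotProduct]
      have h2 : J.trace = n := by
        simp [hJ, Matrix.trace, vecMulVec_apply]
      rw [h1, h2]
      field_simp
      ring
    · rw [hsum]; linarith
    · rw [hsum]
    · rw [hX, Matrix.mul_add, trace_add, Matrix.mul_smul, Matrix.mul_smul, trace_smul,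
        trace_smul, smul_eq_mul, smul_eq_mul, trace_mul_vecMulVec', hJ,
        trace_mul_vecMulVec', honeL, hLdef]
      ring
  have hS2ne : S2.Nonempty := ⟨_, hcons x0 hx0dot hx0sum⟩
  apply le_antisymm
  · have h2 : 2 * sInf S2 ≤ lam2 := by
      rw [hlam2]
      refine le_csInf hS1ne ?_
      rintro r ⟨x, hx1, hx2, rfl⟩
      have := csInf_le hbdd2 (hcons x hx1 hx2)
      linarith
    linarith
  · exact le_csInf hS2ne hS2lb
end

section
/- Let x̃ ∈ {0,1}^n with e^T x̃ = k, and let μ > x̃^T L x̃. Then min { x^T L x : x ∈ {0,1}^n, e^T x = k } = min { x^T (L + μJ) x − 2μk·(e^T x) + μk² : x ∈ {0,1}^n }, where J = ee^T. -/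
open Matrix Finset

lemma binary_sum_nat {n : ℕ} (x : Fin n → ℝ) (hx : ∀ i, x i = 0 ∨ x i = 1) :
    ∃ m : ℕ, ∑ i, x i = (m : ℝ) := by
  refine ⟨(Finset.univ.filter (fun i => x i = 1)).card, ?_⟩
  rw [Finset.card_filter, Nat.cast_sum]
  refine Finset.sum_congr rfl fun i _ => ?_
  rcases hx i with h | h <;> simp [h]

lemma penalty_identity {n : ℕ} (G : SimpleGraph (Fin n)) [DecidableRel G.Adj]
    (μ : ℝ) (k : ℕ) (x : Fin n → ℝ) :
    x ⬝ᵥ ((G.lapMatrix ℝ + μ • Matrix.of (fun _ _ => (1 : ℝ))) *ᵥ x)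
      - 2 * μ * (k : ℝ) * (∑ i, x i) + μ * (k : ℝ) ^ 2
    = x ⬝ᵥ (G.lapMatrix ℝ *ᵥ x) + μ * ((∑ i, x i) - (k : ℝ)) ^ 2 := by
  have hJ : x ⬝ᵥ ((Matrix.of (fun _ _ => (1 : ℝ))) *ᵥ x) = (∑ i, x i) * (∑ i, x i) := by
    simp [dotProduct, Matrix.mulVec, Finset.mul_sum, Finset.sum_mul, mul_comm]
  rw [Matrix.add_mulVec, dotProduct_add, Matrix.smul_mulVec,
    dotProduct_smul, smul_eq_mul, hJ]
  ring

/-- Exact penalty QUBO reformulation of the k-bisection problem: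
for `x̃ ∈ {0,1}ⁿ` with `eᵀx̃ = k` and `μ > x̃ᵀLx̃`,
`min { xᵀLx : x ∈ {0,1}ⁿ, eᵀx = k }
 = min { xᵀ(L + μJ)x − 2μk·(eᵀx) + μk² : x ∈ {0,1}ⁿ }`. -/
theorem bisection_eq_penalized_qubo
    (n : ℕ) (hn : 3 ≤ n) (G : SimpleGraph (Fin n)) [DecidableRel G.Adj]
    (k : ℕ) (hk1 : 1 ≤ k) (hk2 : k ≤ n)
    (xt : Fin n → ℝ) (hxt : ∀ i, xt i = 0 ∨ xt i = 1)
    (hxtsum : ∑ i, xt i = (k : ℝ))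
    (μ : ℝ) (hμ : xt ⬝ᵥ (G.lapMatrix ℝ *ᵥ xt) < μ) :
    sInf {r : ℝ | ∃ x : Fin n → ℝ, (∀ i, x i = 0 ∨ x i = 1) ∧
        ∑ i, x i = (k : ℝ) ∧ r = x ⬝ᵥ (G.lapMatrix ℝ *ᵥ x)}
    = sInf {r : ℝ | ∃ x : Fin n → ℝ, (∀ i, x i = 0 ∨ x i = 1) ∧
        r = x ⬝ᵥ ((G.lapMatrix ℝ + μ • Matrix.of (fun _ _ => (1 : ℝ))) *ᵥ x)
            - 2 * μ * (k : ℝ) * (∑ i, x i) + μ * (k : ℝ) ^ 2} := by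
  set S1 := {r : ℝ | ∃ x : Fin n → ℝ, (∀ i, x i = 0 ∨ x i = 1) ∧
      ∑ i, x i = (k : ℝ) ∧ r = x ⬝ᵥ (G.lapMatrix ℝ *ᵥ x)} with hS1
  set S2 := {r : ℝ | ∃ x : Fin n → ℝ, (∀ i, x i = 0 ∨ x i = 1) ∧
      r = x ⬝ᵥ ((G.lapMatrix ℝ + μ • Matrix.of (fun _ _ => (1 : ℝ))) *ᵥ x)
          - 2 * μ * (k : ℝ) * (∑ i, x i) + μ * (k : ℝ) ^ 2} with hS2
  have hpsd : ∀ y : Fin n → ℝ, 0 ≤ y ⬝ᵥ (G.lapMatrix ℝ *ᵥ y) := by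
    intro y
    have := (G.posSemidef_lapMatrix ℝ).dotProduct_mulVec_nonneg y
    simpa using this
  have hμ0 : 0 ≤ μ := le_of_lt (lt_of_le_of_lt (hpsd xt) hμ)
  have hne1 : S1.Nonempty := ⟨xt ⬝ᵥ (G.lapMatrix ℝ *ᵥ xt), xt, hxt, hxtsum, rfl⟩
  have hne2 : S2.Nonempty := ⟨_, xt, hxt, rfl⟩
  have hbdd1 : BddBelow S1 := by
    refine ⟨0, fun r hr => ?_⟩
    obtain ⟨x, -, -, rfl⟩ := hr
    exact hpsd x
  have hbdd2 : BddBelow S2 := by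
    refine ⟨0, fun r hr => ?_⟩
    obtain ⟨x, -, rfl⟩ := hr
    rw [penalty_identity]
    have := hpsd x
    positivity
  have hsub : S1 ⊆ S2 := by
    rintro r ⟨x, hx, hsum, rfl⟩
    exact ⟨x, hx, by rw [penalty_identity, hsum]; ring⟩
  refine le_antisymm ?_ ?_
  · -- sInf S1 ≤ sInf S2
    refine le_csInf hne2 fun r hr => ?_
    obtain ⟨x, hx, rfl⟩ := hr
    rw [penalty_identity]
    obtain ⟨m, hm⟩ := binary_sum_nat x hx
    by_cases hmk : m = k
    · have : x ⬝ᵥ (G.lapMatrix ℝ *ᵥ x) ∈ S1 := ⟨x, hx, by rw [hm, hmk], rfl⟩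
      calc sInf S1 ≤ x ⬝ᵥ (G.lapMatrix ℝ *ᵥ x) := csInf_le hbdd1 this
        _ ≤ _ := by nlinarith [hpsd x, sq_nonneg ((∑ i, x i) - (k : ℝ))]
    · have h1 : (1 : ℝ) ≤ ((∑ i, x i) - (k : ℝ)) ^ 2 := by
        rw [hm]
        have : ((m : ℤ) - k) ^ 2 ≥ 1 := by
          have : (m : ℤ) - k ≠ 0 := by
            intro h; apply hmk; omega
          nlinarith [sq_nonneg ((m : ℤ) - k), Int.one_le_abs this, sq_abs ((m:ℤ) - k)]
        have := (by exact_mod_cast this : (1 : ℝ) ≤ (((m : ℤ) : ℝ) - k) ^ 2)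
        push_cast at this ⊢
        linarith
      have hle : sInf S1 ≤ xt ⬝ᵥ (G.lapMatrix ℝ *ᵥ xt) :=
        csInf_le hbdd1 ⟨xt, hxt, hxtsum, rfl⟩
      nlinarith [hpsd x]
  · exact le_csInf hne1 fun r hr => csInf_le hbdd2 (hsub hr)
end

section
/- Let γ', γ'' ∈ ℝ and let x', x'' be optimal solutions of P(γ') and P(γ'') respectively. Then f(x') − f(x'') ≤ (P(γ'') − (γ' − γ'')·e^T x'')·(1/(e^T x') − 1/(e^T x'')), where f(x) = x^T L x / (e^T x). -/
open Matrix Finset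

/-- Lemma 2 for Dinkelbach: if `x'`, `x''` are optimal for `P(γ')`
and `P(γ'')`, then
`f(x') − f(x'') ≤ (P(γ'') − (γ' − γ'')·eᵀx'')·(1/(eᵀx') − 1/(eᵀx''))`. -/
theorem dinkelbach_key_inequality
    (n : ℕ) (hn : 3 ≤ n) (G : SimpleGraph (Fin n)) [DecidableRel G.Adj]
    (hconn : G.Connected)
    (F : (Fin n → ℝ) → Prop)
    (hF : ∀ x : Fin n → ℝ, F x ↔ ((∀ i, x i = 0 ∨ x i = 1) ∧
        1 ≤ ∑ i, x i ∧ ∑ i, x i ≤ (n : ℝ) / 2))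
    (γ' γ'' : ℝ) (x' x'' : Fin n → ℝ) (hx' : F x') (hx'' : F x'')
    (hopt' : ∀ x : Fin n → ℝ, F x →
        x' ⬝ᵥ (G.lapMatrix ℝ *ᵥ x') - γ' * ∑ i, x' i
          ≤ x ⬝ᵥ (G.lapMatrix ℝ *ᵥ x) - γ' * ∑ i, x i)
    (hopt'' : ∀ x : Fin n → ℝ, F x →
        x'' ⬝ᵥ (G.lapMatrix ℝ *ᵥ x'') - γ'' * ∑ i, x'' i
          ≤ x ⬝ᵥ (G.lapMatrix ℝ *ᵥ x) - γ'' * ∑ i, x i) :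
    (x' ⬝ᵥ (G.lapMatrix ℝ *ᵥ x')) / (∑ i, x' i)
      - (x'' ⬝ᵥ (G.lapMatrix ℝ *ᵥ x'')) / (∑ i, x'' i)
    ≤ ((x'' ⬝ᵥ (G.lapMatrix ℝ *ᵥ x'') - γ'' * ∑ i, x'' i)
        - (γ' - γ'') * ∑ i, x'' i)
      * (1 / (∑ i, x' i) - 1 / (∑ i, x'' i)) := by
  set a := x' ⬝ᵥ (G.lapMatrix ℝ *ᵥ x') with ha
  set b := x'' ⬝ᵥ (G.lapMatrix ℝ *ᵥ x'') with hb
  set s := ∑ i, x' i with hs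
  set t := ∑ i, x'' i with ht
  have hs1 : (1:ℝ) ≤ s := ((hF x').mp hx').2.1
  have ht1 : (1:ℝ) ≤ t := ((hF x'').mp hx'').2.1
  have hs0 : (0:ℝ) < s := by linarith
  have ht0 : (0:ℝ) < t := by linarith
  have key : a - γ' * s ≤ b - γ' * t := hopt' x'' hx''
  have heq : a/s - b/t - ((b - γ'' * t - (γ' - γ'') * t) * (1/s - 1/t))
      = (a - γ' * s - (b - γ' * t))/s := by
    field_simp
    ring
  have hle : (a - γ' * s - (b - γ' * t))/s ≤ 0 :=
    div_nonpos_of_nonpos_of_nonneg (by linarith) hs0.le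
  linarith [heq ▸ hle]
end

section
/- In the discrete Newton–Dinkelbach iteration γ_{i+1} = f(x_i) with x_i a minimizer of P(γ_i), one has γ_{i+1} − γ* ≤ (γ_i − γ*)·(1 − (e^T x*)/(e^T x_i)), where x* is an optimal solution of the edge expansion problem and γ* = f(x*) = h(G). -/
open Matrix Finset

/-- in the discrete Newton–Dinkelbach iteration `γ_{i+1} = f(x_i)`,
`γ_{i+1} − γ* ≤ (γ_i − γ*)·(1 − (eᵀx*)/(eᵀx_i))`, where `x*` is optimal for the
edge expansion problem and `γ* = f(x*) = h(G)`. -/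
theorem dinkelbach_iteration_contraction
    (n : ℕ) (hn : 3 ≤ n) (G : SimpleGraph (Fin n)) [DecidableRel G.Adj]
    (hconn : G.Connected)
    (F : (Fin n → ℝ) → Prop)
    (hF : ∀ x : Fin n → ℝ, F x ↔ ((∀ i, x i = 0 ∨ x i = 1) ∧
        1 ≤ ∑ i, x i ∧ ∑ i, x i ≤ (n : ℝ) / 2))
    (xstar : Fin n → ℝ) (hxstar : F xstar)
    (hoptstar : ∀ x : Fin n → ℝ, F x →
        (xstar ⬝ᵥ (G.lapMatrix ℝ *ᵥ xstar)) / (∑ i, xstar i)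
          ≤ (x ⬝ᵥ (G.lapMatrix ℝ *ᵥ x)) / (∑ i, x i))
    (γstar : ℝ)
    (hγstar : γstar = (xstar ⬝ᵥ (G.lapMatrix ℝ *ᵥ xstar)) / (∑ i, xstar i))
    (γi : ℝ) (hγi : γstar ≤ γi)
    (xi : Fin n → ℝ) (hxi : F xi)
    (hopti : ∀ x : Fin n → ℝ, F x →
        xi ⬝ᵥ (G.lapMatrix ℝ *ᵥ xi) - γi * ∑ i, xi i
          ≤ x ⬝ᵥ (G.lapMatrix ℝ *ᵥ x) - γi * ∑ i, x i)
    (γnext : ℝ)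
    (hγnext : γnext = (xi ⬝ᵥ (G.lapMatrix ℝ *ᵥ xi)) / (∑ i, xi i)) :
    γnext - γstar ≤ (γi - γstar) * (1 - (∑ i, xstar i) / (∑ i, xi i)) := by
  have hs1 : (1:ℝ) ≤ ∑ i, xstar i := ((hF xstar).1 hxstar).2.1
  have hs2 : (1:ℝ) ≤ ∑ i, xi i := ((hF xi).1 hxi).2.1
  have hps : (0:ℝ) < ∑ i, xstar i := lt_of_lt_of_le one_pos hs1
  have hpi : (0:ℝ) < ∑ i, xi i := lt_of_lt_of_le one_pos hs2
  have hQstar : xstar ⬝ᵥ (G.lapMatrix ℝ *ᵥ xstar) = γstar * ∑ i, xstar i := by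
    rw [hγstar]; field_simp
  have key := hopti xstar hxstar
  rw [hQstar] at key
  have hQ : xi ⬝ᵥ (G.lapMatrix ℝ *ᵥ xi) ≤ γi * ∑ i, xi i - (γi - γstar) * ∑ i, xstar i := by
    nlinarith
  rw [hγnext, div_sub' hpi.ne', div_le_iff₀ hpi]
  have h1 : (γi - γstar) * (1 - (∑ i, xstar i) / (∑ i, xi i)) * (∑ i, xi i)
      = (γi - γstar) * ((∑ i, xi i) - ∑ i, xstar i) := by
    field_simp
  rw [h1]
  nlinarith
end

section
/- Let γ = γ_n/γ_d with integers γ_n ≥ 0, γ_d > 0, and suppose there exists x' ∈ F with x'^T L x'/(e^T x') = γ. Then for any penalty σ > γ_n·n, min_{x∈F} (γ_d x^T L x − γ_n e^T x) equals the unconstrained minimum over x ∈ {0,1}^n, α,β ∈ {0,1}^{n_s+1} of γ_d x^T L x − γ_n e^T x + σ·‖(e^T x − v^T α − 1, e^T x + v^T β − ⌊n/2⌋)‖². -/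
open Matrix Finset

lemma sum_bits_nat : ∀ (m k : ℕ), k < 2^m → ∑ i : Fin m, (if k.testBit i then 2^(i:ℕ) else 0) = k := by
  intro m
  induction m with
  | zero => intro k hk; interval_cases k; simp
  | succ m ih =>
    intro k hk
    rw [Fin.sum_univ_succ]
    have h2 : k / 2 < 2 ^ m := by omega
    have := ih (k/2) h2
    have hb : ∀ i : Fin m, (if k.testBit (i.succ : ℕ) then 2^((i.succ : Fin (m+1)) : ℕ) else 0)
        = 2 * (if (k/2).testBit i then 2^(i:ℕ) else 0) := by
      intro i
      rw [show ((i.succ : Fin (m+1)) : ℕ) = (i:ℕ)+1 from rfl, Nat.testBit_succ]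
      split <;> ring
    rw [Finset.sum_congr rfl (fun i _ => hb i), ← Finset.mul_sum, this]
    have h0 : (if k.testBit 0 then 2^((0 : Fin (m+1)):ℕ) else 0) = k % 2 := by
      rw [Nat.testBit_zero]
      rcases Nat.even_or_odd k with h | h
      · simp [Nat.even_iff.mp h]
      · simp [Nat.odd_iff.mp h]
    rw [show ((0 : Fin (m+1)) : ℕ) = 0 from rfl] at h0 ⊢; omega

lemma exists_bits (m k : ℕ) (hk : k < 2^m) (v : Fin m → ℝ) (hv : ∀ i, v i = 2^(i:ℕ)) :
    ∃ α : Fin m → ℝ, (∀ i, α i = 0 ∨ α i = 1) ∧ ∑ i, v i * α i = k := by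
  refine ⟨fun i => if k.testBit i then 1 else 0, fun i => by simp only []; split <;> simp, ?_⟩
  have : ∀ i : Fin m, v i * (if k.testBit i then (1:ℝ) else 0)
      = ((if k.testBit i then 2^(i:ℕ) else 0 : ℕ) : ℝ) := by
    intro i; rw [hv i]; split <;> push_cast <;> ring
  rw [Finset.sum_congr rfl (fun i _ => this i), ← Nat.cast_sum, sum_bits_nat m k hk]

lemma exists_card (n : ℕ) (x : Fin n → ℝ) (hx : ∀ i, x i = 0 ∨ x i = 1) :
    ∃ k : ℕ, (k : ℝ) = ∑ i, x i ∧ k ≤ n := by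
  classical
  refine ⟨(univ.filter (fun i => x i = 1)).card, ?_, le_trans (card_filter_le _ _) (by simp)⟩
  rw [← Finset.sum_filter_add_sum_filter_not univ (fun i => x i = 1) x]
  have h1 : ∑ i ∈ univ.filter (fun i => x i = 1), x i
      = (univ.filter (fun i => x i = 1)).card := by
    rw [Finset.sum_congr rfl (fun i hi => (mem_filter.mp hi).2), Finset.sum_const]
    simp
  have h2 : ∑ i ∈ univ.filter (fun i => ¬ x i = 1), x i = 0 := by
    apply Finset.sum_eq_zero
    intro i hi
    rcases hx i with h | h
    · exact h
    · exact absurd h (mem_filter.mp hi).2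
  rw [h1, h2, add_zero]

lemma sum_v_nonneg {m : ℕ} (v : Fin m → ℝ) (hv : ∀ i, v i = 2^(i:ℕ))
    (α : Fin m → ℝ) (hα : ∀ i, α i = 0 ∨ α i = 1) : 0 ≤ ∑ i, v i * α i := by
  apply Finset.sum_nonneg
  intro i _
  have : (0:ℝ) ≤ α i := by rcases hα i with h | h <;> rw [h] <;> norm_num
  have : (0:ℝ) ≤ v i := by rw [hv i]; positivity
  positivity

/-- exact penalty reformulation of the parametrized problem `Q(γ)`,
`γ = γ_n/γ_d`: if some `x' ∈ F` attains ratio `γ` and `σ > γ_n·n`, then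
`min_{x∈F} (γ_d xᵀLx − γ_n eᵀx)` equals the unconstrained minimum of
`γ_d xᵀLx − γ_n eᵀx + σ‖(eᵀx − vᵀα − 1, eᵀx + vᵀβ − ⌊n/2⌋)‖²` over binary `x, α, β`. -/
theorem parametrized_problem_eq_penalized_qubo
    (n : ℕ) (hn : 3 ≤ n) (G : SimpleGraph (Fin n)) [DecidableRel G.Adj]
    (hconn : G.Connected)
    (γn γd : ℤ) (hγn : 0 ≤ γn) (hγd : 0 < γd)
    (ns : ℕ) (hns : ns = Nat.clog 2 (n / 2) - 1)
    (v : Fin (ns + 1) → ℝ) (hv : ∀ i : Fin (ns + 1), v i = 2 ^ (i : ℕ))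
    (x' : Fin n → ℝ) (hx'bin : ∀ i, x' i = 0 ∨ x' i = 1)
    (hx'lo : 1 ≤ ∑ i, x' i) (hx'hi : ∑ i, x' i ≤ (n : ℝ) / 2)
    (hx'ratio : (x' ⬝ᵥ (G.lapMatrix ℝ *ᵥ x')) / (∑ i, x' i) = (γn : ℝ) / (γd : ℝ))
    (σ : ℝ) (hσ : (γn : ℝ) * (n : ℝ) < σ) :
    sInf {r : ℝ | ∃ x : Fin n → ℝ, (∀ i, x i = 0 ∨ x i = 1) ∧
        1 ≤ ∑ i, x i ∧ ∑ i, x i ≤ (n : ℝ) / 2 ∧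
        r = (γd : ℝ) * (x ⬝ᵥ (G.lapMatrix ℝ *ᵥ x)) - (γn : ℝ) * ∑ i, x i}
    = sInf {r : ℝ | ∃ x : Fin n → ℝ, ∃ α β : Fin (ns + 1) → ℝ,
        (∀ i, x i = 0 ∨ x i = 1) ∧
        (∀ i, α i = 0 ∨ α i = 1) ∧ (∀ i, β i = 0 ∨ β i = 1) ∧
        r = (γd : ℝ) * (x ⬝ᵥ (G.lapMatrix ℝ *ᵥ x)) - (γn : ℝ) * ∑ i, x i
          + σ * (((∑ i, x i) - (∑ i, v i * α i) - 1) ^ 2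
              + ((∑ i, x i) + (∑ i, v i * β i) - ((n / 2 : ℕ) : ℝ)) ^ 2)} := by
  classical
  set m : ℕ := n / 2 with hm
  set S1 : Set ℝ := {r : ℝ | ∃ x : Fin n → ℝ, (∀ i, x i = 0 ∨ x i = 1) ∧
        1 ≤ ∑ i, x i ∧ ∑ i, x i ≤ (n : ℝ) / 2 ∧
        r = (γd : ℝ) * (x ⬝ᵥ (G.lapMatrix ℝ *ᵥ x)) - (γn : ℝ) * ∑ i, x i} with hS1
  set S2 : Set ℝ := {r : ℝ | ∃ x : Fin n → ℝ, ∃ α β : Fin (ns + 1) → ℝ,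
        (∀ i, x i = 0 ∨ x i = 1) ∧
        (∀ i, α i = 0 ∨ α i = 1) ∧ (∀ i, β i = 0 ∨ β i = 1) ∧
        r = (γd : ℝ) * (x ⬝ᵥ (G.lapMatrix ℝ *ᵥ x)) - (γn : ℝ) * ∑ i, x i
          + σ * (((∑ i, x i) - (∑ i, v i * α i) - 1) ^ 2
              + ((∑ i, x i) + (∑ i, v i * β i) - ((m : ℕ) : ℝ)) ^ 2)} with hS2
  -- basic facts
  have hγdR : (0:ℝ) < (γd:ℝ) := by exact_mod_cast hγd
  have hγnR : (0:ℝ) ≤ (γn:ℝ) := by exact_mod_cast hγn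
  have hσ0 : (0:ℝ) ≤ σ := by
    have : (0:ℝ) ≤ (γn:ℝ) * n := by positivity
    linarith
  have hm1 : 1 ≤ m := by omega
  have hm2 : m ≤ 2 ^ (ns + 1) := by
    by_cases h : m ≤ 1
    · exact le_trans h (Nat.one_le_two_pow)
    · have hc : 0 < Nat.clog 2 m := Nat.clog_pos (by norm_num) (by omega)
      have he : ns + 1 = Nat.clog 2 m := by omega
      rw [he]
      exact Nat.le_pow_clog (by norm_num) m
  have hmr : (m : ℝ) ≤ (n : ℝ) / 2 := by
    have : 2 * m ≤ n := by omega
    have : ((2 * m : ℕ) : ℝ) ≤ (n : ℝ) := by exact_mod_cast this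
    push_cast at this
    linarith
  have hPSD : ∀ x : Fin n → ℝ, 0 ≤ x ⬝ᵥ (G.lapMatrix ℝ *ᵥ x) := by
    intro x
    have := (G.posSemidef_lapMatrix ℝ).dotProduct_mulVec_nonneg x
    simpa using this
  have hsum_le : ∀ (x : Fin n → ℝ), (∀ i, x i = 0 ∨ x i = 1) → ∑ i, x i ≤ n := by
    intro x hx
    calc ∑ i, x i ≤ ∑ _i : Fin n, (1:ℝ) := by
          apply Finset.sum_le_sum
          intro i _
          rcases hx i with h | h <;> rw [h] <;> norm_num
      _ = n := by simp
  have hbase : ∀ (x : Fin n → ℝ), (∀ i, x i = 0 ∨ x i = 1) →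
      -((γn:ℝ) * n) ≤ (γd : ℝ) * (x ⬝ᵥ (G.lapMatrix ℝ *ᵥ x)) - (γn : ℝ) * ∑ i, x i := by
    intro x hx
    have h1 := hPSD x
    have h2 := hsum_le x hx
    have h3 : (γn:ℝ) * ∑ i, x i ≤ (γn:ℝ) * n := mul_le_mul_of_nonneg_left h2 hγnR
    nlinarith
  have hbdd1 : BddBelow S1 := by
    refine ⟨-((γn:ℝ) * n), ?_⟩
    rintro r ⟨x, hx, _, _, rfl⟩
    exact hbase x hx
  have hbdd2 : BddBelow S2 := by
    refine ⟨-((γn:ℝ) * n), ?_⟩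
    rintro r ⟨x, α, β, hx, hα, hβ, rfl⟩
    have h1 := hbase x hx
    have h2 : 0 ≤ σ * (((∑ i, x i) - (∑ i, v i * α i) - 1) ^ 2
        + ((∑ i, x i) + (∑ i, v i * β i) - ((m : ℕ) : ℝ)) ^ 2) := by positivity
    linarith
  -- value at x' is 0
  have hx'pos : (0:ℝ) < ∑ i, x' i := lt_of_lt_of_le one_pos hx'lo
  have h0val : (γd : ℝ) * (x' ⬝ᵥ (G.lapMatrix ℝ *ᵥ x')) - (γn : ℝ) * ∑ i, x' i = 0 := by
    have hne : (∑ i, x' i) ≠ 0 := ne_of_gt hx'pos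
    have hdne : (γd:ℝ) ≠ 0 := ne_of_gt hγdR
    field_simp at hx'ratio
    linarith [hx'ratio]
  have h0mem : (0:ℝ) ∈ S1 := ⟨x', hx'bin, hx'lo, hx'hi, h0val.symm⟩
  have hS1ne : S1.Nonempty := ⟨0, h0mem⟩
  -- feasible construction of slacks
  have hslack : ∀ k : ℕ, 1 ≤ k → k ≤ m →
      ∃ α β : Fin (ns+1) → ℝ, (∀ i, α i = 0 ∨ α i = 1) ∧ (∀ i, β i = 0 ∨ β i = 1) ∧
        ∑ i, v i * α i = (k:ℝ) - 1 ∧ ∑ i, v i * β i = (m:ℝ) - k := by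
    intro k hk1 hkm
    obtain ⟨α, hα, hαs⟩ := exists_bits (ns+1) (k-1) (by omega) v hv
    obtain ⟨β, hβ, hβs⟩ := exists_bits (ns+1) (m-k) (by omega) v hv
    refine ⟨α, β, hα, hβ, ?_, ?_⟩
    · rw [hαs]; push_cast [Nat.cast_sub hk1]; ring
    · rw [hβs]; push_cast [Nat.cast_sub hkm]; ring
  -- nonemptiness of S2
  have hS2ne : S2.Nonempty := by
    obtain ⟨α, β, hα, hβ, hαs, hβs⟩ := hslack 1 le_rfl hm1
    exact ⟨_, x', α, β, hx'bin, hα, hβ, rfl⟩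
  apply le_antisymm
  · -- sInf S1 ≤ sInf S2
    apply le_csInf hS2ne
    rintro r ⟨x, α, β, hx, hα, hβ, rfl⟩
    obtain ⟨k, hk, hkn⟩ := exists_card n x hx
    have hαnn := sum_v_nonneg v hv α hα
    have hβnn := sum_v_nonneg v hv β hβ
    by_cases hfeas : 1 ≤ k ∧ k ≤ m
    · have hmem : (γd : ℝ) * (x ⬝ᵥ (G.lapMatrix ℝ *ᵥ x)) - (γn : ℝ) * ∑ i, x i ∈ S1 := by
        refine ⟨x, hx, ?_, ?_, rfl⟩
        · rw [← hk]; exact_mod_cast hfeas.1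
        · rw [← hk]
          calc (k:ℝ) ≤ (m:ℝ) := by exact_mod_cast hfeas.2
            _ ≤ (n:ℝ)/2 := hmr
      have hpen : 0 ≤ σ * (((∑ i, x i) - (∑ i, v i * α i) - 1) ^ 2
          + ((∑ i, x i) + (∑ i, v i * β i) - ((m : ℕ) : ℝ)) ^ 2) := by positivity
      have := csInf_le hbdd1 hmem
      linarith
    · -- infeasible: penalty ≥ σ
      have hsq : 1 ≤ ((∑ i, x i) - (∑ i, v i * α i) - 1) ^ 2
          + ((∑ i, x i) + (∑ i, v i * β i) - ((m : ℕ) : ℝ)) ^ 2 := by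
        rcases Nat.lt_or_ge k 1 with hk0 | hk1
        · have : k = 0 := by omega
          have hx0 : ∑ i, x i = 0 := by rw [← hk, this]; norm_num
          rw [hx0]
          nlinarith [sq_nonneg ((0:ℝ) + (∑ i, v i * β i) - (m:ℝ))]
        · have hkm : m + 1 ≤ k := by omega
          have : (m:ℝ) + 1 ≤ ∑ i, x i := by
            rw [← hk]; exact_mod_cast hkm
          nlinarith [sq_nonneg ((∑ i, x i) - (∑ i, v i * α i) - 1)]
      have hb := hbase x hx
      have hr : -((γn:ℝ) * n) + σ ≤ (γd : ℝ) * (x ⬝ᵥ (G.lapMatrix ℝ *ᵥ x)) - (γn : ℝ) * ∑ i, x i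
          + σ * (((∑ i, x i) - (∑ i, v i * α i) - 1) ^ 2
              + ((∑ i, x i) + (∑ i, v i * β i) - ((m : ℕ) : ℝ)) ^ 2) := by
        nlinarith
      have h0 := csInf_le hbdd1 h0mem
      linarith
  · -- sInf S2 ≤ sInf S1
    apply le_csInf hS1ne
    rintro r ⟨x, hx, hlo, hhi, rfl⟩
    obtain ⟨k, hk, hkn⟩ := exists_card n x hx
    have hk1 : 1 ≤ k := by
      by_contra h
      have : k = 0 := by omega
      rw [← hk, this] at hlo
      norm_num at hlo
    have hkm : k ≤ m := by
      have h2 : 2 * (k:ℝ) ≤ (n:ℝ) := by rw [hk] at *; linarith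
      have : (2 * k : ℕ) ≤ n := by exact_mod_cast h2
      omega
    obtain ⟨α, β, hα, hβ, hαs, hβs⟩ := hslack k hk1 hkm
    have hmem : (γd : ℝ) * (x ⬝ᵥ (G.lapMatrix ℝ *ᵥ x)) - (γn : ℝ) * ∑ i, x i ∈ S2 := by
      refine ⟨x, α, β, hx, hα, hβ, ?_⟩
      rw [hαs, hβs, ← hk]
      ring
    exact csInf_le hbdd2 hmem
end
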